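/- The assignment g_s ↦ T_s, e_t ↦ 1 (s ∈ S, t ∈ R) induces a surjective k-algebra morphism 𝔭 : C_W(u) → H_W(u). For every w ∈ W it maps g_w to T_w, and it maps each e_J (J a finite subset of R) to 1. Its kernel is the two-sided ideal of C_W(u) generated by the elements e_s − 1 for s ∈ S. -/

import Mathlib

open scoped Classical

noncomputable section

namespace CWpaper

variable {B : Type} {M : CoxeterMatrix B} {W : Type} [Group W] (cs : CoxeterSystem M W)
variable (k : Type) [CommRing k]

/-- The set of reflections of the Coxeter system, as a subtype. -/
abbrev Refl := {t : W // cs.IsReflection t}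

/-- Index type for the generators of `C_W(u)`: `inl i` indexes `g` generators,
`inr t` indexes `e` generators. -/
abbrev Gen := B ⊕ Refl cs

/-- The free-algebra generator corresponding to `g_s`. -/
def gf (i : B) : FreeAlgebra k (Gen cs) := FreeAlgebra.ι k (Sum.inl i)

/-- The free-algebra generator corresponding to `e_t`. -/
def ef (t : Refl cs) : FreeAlgebra k (Gen cs) := FreeAlgebra.ι k (Sum.inr t)

/-- A simple reflection, as a reflection. -/
def simpleR (i : B) : Refl cs := ⟨cs.simple i, cs.isReflection_simple i⟩

/-- Conjugate of a reflection by a group element. -/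
def conjR (w : W) (t : Refl cs) : Refl cs := ⟨w * t.1 * w⁻¹, t.2.conj w⟩

/-- The defining relations of the algebra `C_W(u)`. -/
inductive CWrel (u : B → k) : FreeAlgebra k (Gen cs) → FreeAlgebra k (Gen cs) → Prop
  | braid (i j : B) (h : M i j ≠ 0) :
      CWrel u (((CoxeterSystem.alternatingWord i j (M i j)).map (gf cs k)).prod)
              (((CoxeterSystem.alternatingWord j i (M i j)).map (gf cs k)).prod)
  | idem (t : Refl cs) : CWrel u (ef cs k t * ef cs k t) (ef cs k t)
  | comm (t₁ t₂ : Refl cs) : CWrel u (ef cs k t₁ * ef cs k t₂) (ef cs k t₂ * ef cs k t₁)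
  | conj (t t₁ : Refl cs) :
      CWrel u (ef cs k t * ef cs k t₁) (ef cs k t * ef cs k (conjR cs t.1 t₁))
  | move (i : B) (t : Refl cs) :
      CWrel u (gf cs k i * ef cs k t) (ef cs k (conjR cs (cs.simple i) t) * gf cs k i)
  | quad (i : B) :
      CWrel u (gf cs k i * gf cs k i)
        (1 + algebraMap k _ (u i - 1) * ef cs k (simpleR cs i) * (1 + gf cs k i))

variable (u : B → k)

/-- The algebra `C_W(u)`. -/
abbrev CW := RingQuot (CWrel cs k u)

/-- The generator `g_s` of `C_W(u)`. -/
def gCW (i : B) : CW cs k u := RingQuot.mkAlgHom k (CWrel cs k u) (gf cs k i)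

/-- The generator `e_t` of `C_W(u)`. -/
def eCW (t : Refl cs) : CW cs k u := RingQuot.mkAlgHom k (CWrel cs k u) (ef cs k t)

theorem eCW_commute (t₁ t₂ : Refl cs) : Commute (eCW cs k u t₁) (eCW cs k u t₂) := by
  have h := RingQuot.mkAlgHom_rel k (CWrel.comm (cs := cs) (k := k) (u := u) t₁ t₂)
  simp only [map_mul] at h
  exact h

/-- The product `e_J = ∏_{t ∈ J} e_t` for a finite set of reflections `J`. -/
def eJ (J : Finset (Refl cs)) : CW cs k u :=
  J.noncommProd (eCW cs k u) (fun t₁ _ t₂ _ _ => eCW_commute cs k u t₁ t₂)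

/-- `gg : W → C_W(u)` is the family `(g_w)_{w ∈ W}` iff for every reduced word
`l` for `w`, `gg w` is the product of the `g_s`, `s ∈ l`. -/
def IsGFamily (gg : W → CW cs k u) : Prop :=
  ∀ l : List B, cs.IsReduced l → gg (cs.wordProd l) = (l.map (gCW cs k u)).prod

end CWpaper

namespace CWpaper

/-- The defining relations of the Iwahori–Hecke algebra `H_W(u)`. -/
inductive Hrel {B : Type} (M : CoxeterMatrix B) (k : Type) [CommRing k] (u : B → k) :
    FreeAlgebra k B → FreeAlgebra k B → Prop
  | braid (i j : B) (h : M i j ≠ 0) :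
      Hrel M k u (((CoxeterSystem.alternatingWord i j (M i j)).map (FreeAlgebra.ι k)).prod)
                 (((CoxeterSystem.alternatingWord j i (M i j)).map (FreeAlgebra.ι k)).prod)
  | quad (i : B) :
      Hrel M k u (FreeAlgebra.ι k i * FreeAlgebra.ι k i)
        (algebraMap k _ (u i) + algebraMap k _ (u i - 1) * FreeAlgebra.ι k i)

/-- The Iwahori–Hecke algebra `H_W(u)`. -/
abbrev HW {B : Type} (M : CoxeterMatrix B) (k : Type) [CommRing k] (u : B → k) :=
  RingQuot (Hrel M k u)

/-- The generator `T_s` of the Iwahori–Hecke algebra. -/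
def THW {B : Type} (M : CoxeterMatrix B) (k : Type) [CommRing k] (u : B → k) (i : B) :
    HW M k u :=
  RingQuot.mkAlgHom k (Hrel M k u) (FreeAlgebra.ι k i)

end CWpaper

namespace CWpaper

/-- `TT : W → H_W(u)` is the family `(T_w)_{w ∈ W}` iff for every reduced word `l` for `w`,
`TT w` is the product of the `T_s`, `s ∈ l`. -/
def IsTFamily {B : Type} {M : CoxeterMatrix B} {W : Type} [Group W] (cs : CoxeterSystem M W)
    (k : Type) [CommRing k] (u : B → k) (TT : W → HW M k u) : Prop :=
  ∀ l : List B, cs.IsReduced l → TT (cs.wordProd l) = (l.map (THW M k u)).prod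

/-! Sending `g_s ↦ T_s` and every `e_t ↦ 1` respects the defining relations of `C_W(u)`, since
relation (6) collapses to the quadratic Hecke relation once `e_s = 1`. Conversely, in the quotient
of `C_W(u)` by the ideal generated by the `e_s − 1`, relation (4) in the form
`e_s e_{sts} = e_s e_t` propagates `e_s = 1` from simple reflections to all reflections, so the
images of the `g_s` satisfy the Hecke relations and `H_W(u)` maps to that quotient, inverting
`𝔭` on it. -/

section Relations

variable {B : Type} {M : CoxeterMatrix B} {W : Type} [Group W] (cs : CoxeterSystem M W)
variable (k : Type) [CommRing k] (u : B → k)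

lemma conjR_mul (a b : W) (t : Refl cs) :
    conjR cs (a * b) t = conjR cs a (conjR cs b t) :=
  Subtype.ext (by simp only [conjR, mul_inv_rev, mul_assoc])

lemma eCW_mul_eCW_conjR (i : B) (t : Refl cs) :
    eCW cs k u (simpleR cs i) * eCW cs k u (conjR cs (cs.simple i) t)
      = eCW cs k u (simpleR cs i) * eCW cs k u t := by
  have h := RingQuot.mkAlgHom_rel k (CWrel.conj (u := u) (simpleR cs i) t)
  rw [map_mul, map_mul] at h
  exact h.symm

lemma gCW_mul_self (i : B) :
    gCW cs k u i * gCW cs k u i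
      = 1 + algebraMap k _ (u i - 1) * eCW cs k u (simpleR cs i) * (1 + gCW cs k u i) := by
  have h := RingQuot.mkAlgHom_rel k (CWrel.quad (cs := cs) (u := u) i)
  simp only [map_mul, map_add, map_one, AlgHom.commutes] at h
  exact h

lemma prod_alternatingWord_gCW (i j : B) (h : M i j ≠ 0) :
    ((CoxeterSystem.alternatingWord i j (M i j)).map (gCW cs k u)).prod
      = ((CoxeterSystem.alternatingWord j i (M i j)).map (gCW cs k u)).prod := by
  have h := RingQuot.mkAlgHom_rel k (CWrel.braid (cs := cs) (u := u) i j h)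
  rw [map_list_prod, map_list_prod, List.map_map, List.map_map] at h
  exact h

lemma THW_mul_self (i : B) :
    THW M k u i * THW M k u i
      = algebraMap k _ (u i) + algebraMap k _ (u i - 1) * THW M k u i := by
  have h := RingQuot.mkAlgHom_rel k (Hrel.quad (M := M) (u := u) i)
  simp only [map_mul, map_add, AlgHom.commutes] at h
  exact h

lemma prod_alternatingWord_THW (i j : B) (h : M i j ≠ 0) :
    ((CoxeterSystem.alternatingWord i j (M i j)).map (THW M k u)).prod
      = ((CoxeterSystem.alternatingWord j i (M i j)).map (THW M k u)).prod := by
  have h := RingQuot.mkAlgHom_rel k (Hrel.braid (M := M) (u := u) i j h)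
  rw [map_list_prod, map_list_prod, List.map_map, List.map_map] at h
  exact h

end Relations

section UniversalProperties

variable {B : Type} {M : CoxeterMatrix B} {W : Type} [Group W] (cs : CoxeterSystem M W)
variable {k : Type} [CommRing k] {u : B → k} {A : Type*} [Semiring A] [Algebra k A]

theorem CW.algHom_ext {f g : CW cs k u →ₐ[k] A}
    (hg : ∀ i, f (gCW cs k u i) = g (gCW cs k u i))
    (he : ∀ t, f (eCW cs k u t) = g (eCW cs k u t)) : f = g :=
  RingQuot.ringQuot_ext' _ _ _ <| FreeAlgebra.hom_ext <| funext fun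
    | .inl i => hg i
    | .inr t => he t

theorem map_eCW_eq_one {f : CW cs k u →ₐ[k] A} (hf : ∀ i, f (eCW cs k u (simpleR cs i)) = 1)
    (t : Refl cs) : f (eCW cs k u t) = 1 := by
  rcases t with ⟨_, w, i, rfl⟩
  change f (eCW cs k u (conjR cs w (simpleR cs i))) = 1
  induction w using cs.simple_induction_left with
  | one => simpa only [conjR, simpleR, one_mul, inv_one, mul_one] using hf i
  | mul_simple_left w j ih =>
    rw [conjR_mul, ← one_mul (f _), ← hf j, ← map_mul, eCW_mul_eCW_conjR, map_mul, hf j, ih,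
      mul_one]

variable (M k u) in
def HW.lift (a : B → A)
    (braid : ∀ i j, M i j ≠ 0 → ((CoxeterSystem.alternatingWord i j (M i j)).map a).prod
      = ((CoxeterSystem.alternatingWord j i (M i j)).map a).prod)
    (quad : ∀ i, a i * a i = algebraMap k A (u i) + algebraMap k A (u i - 1) * a i) :
    HW M k u →ₐ[k] A :=
  RingQuot.liftAlgHom k (Subtype.mk (FreeAlgebra.lift k a) (by
    rintro _ _ (⟨i, j, hij⟩ | ⟨i⟩)
    · simpa only [map_list_prod, List.map_map, Function.comp_def, FreeAlgebra.lift_ι_apply] using braid i j hij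
    · simpa only [map_mul, map_add, AlgHom.commutes, FreeAlgebra.lift_ι_apply] using quad i))

@[simp]
lemma HW.lift_THW (a : B → A) braid quad (i : B) :
    HW.lift M k u a braid quad (THW M k u i) = a i := by
  rw [HW.lift, THW, RingQuot.liftAlgHom_mkAlgHom_apply, FreeAlgebra.lift_ι_apply]

end UniversalProperties

section Projection

variable {B : Type} {M : CoxeterMatrix B} {W : Type} [Group W] (cs : CoxeterSystem M W)
variable (k : Type) [CommRing k] (u : B → k)

/-- The morphism `𝔭` of the paper. -/
def CW.toHW : CW cs k u →ₐ[k] HW M k u :=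
  RingQuot.liftAlgHom k (Subtype.mk (FreeAlgebra.lift k (Sum.elim (THW M k u) 1)) (by
    rintro _ _ (⟨i, j, hij⟩ | _ | _ | _ | _ | i)
    · simpa only [gf, map_list_prod, List.map_map, Function.comp_def, FreeAlgebra.lift_ι_apply,
        Sum.elim_inl] using prod_alternatingWord_THW k u i j hij
    all_goals simp only [gf, ef, map_mul, map_add, map_one, AlgHom.commutes,
      FreeAlgebra.lift_ι_apply, Sum.elim_inl, Sum.elim_inr, Pi.one_apply, mul_one, one_mul]
    rw [THW_mul_self, map_sub, map_one]
    noncomm_ring))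

@[simp]
lemma CW.toHW_gCW (i : B) : CW.toHW cs k u (gCW cs k u i) = THW M k u i := by
  rw [CW.toHW, gCW, RingQuot.liftAlgHom_mkAlgHom_apply, gf, FreeAlgebra.lift_ι_apply,
    Sum.elim_inl]

@[simp]
lemma CW.toHW_eCW (t : Refl cs) : CW.toHW cs k u (eCW cs k u t) = 1 := by
  rw [CW.toHW, eCW, RingQuot.liftAlgHom_mkAlgHom_apply, ef, FreeAlgebra.lift_ι_apply,
    Sum.elim_inr, Pi.one_apply]

lemma CW.toHW_prod_map_gCW (l : List B) :
    CW.toHW cs k u (l.map (gCW cs k u)).prod = (l.map (THW M k u)).prod := by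
  rw [map_list_prod, List.map_map]
  exact congrArg _ (List.map_congr_left fun i _ => CW.toHW_gCW cs k u i)

lemma CW.toHW_eJ (J : Finset (Refl cs)) : CW.toHW cs k u (eJ cs k u J) = 1 := by
  refine (Finset.map_noncommProd _ _ _ _).trans ?_
  exact (Finset.noncommProd_eq_pow_card _ _ _ 1 fun t _ => CW.toHW_eCW cs k u t).trans
    (one_pow _)

/-- `H_W(u)` is generated by the `T_s = 𝔭(g_s)`. -/
lemma CW.toHW_surjective : Function.Surjective (CW.toHW cs k u) := by
  let σ : FreeAlgebra k B →ₐ[k] CW cs k u := FreeAlgebra.lift k (gCW cs k u)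
  have h : (CW.toHW cs k u).comp σ = RingQuot.mkAlgHom k (Hrel M k u) :=
    FreeAlgebra.hom_ext <| funext fun i => by simp [σ, THW]
  refine Function.Surjective.of_comp (g := σ) ?_
  rw [← AlgHom.coe_comp, h]
  exact RingQuot.mkAlgHom_surjective k (Hrel M k u)

end Projection

section Kernel

variable {B : Type} {M : CoxeterMatrix B} {W : Type} [Group W] (cs : CoxeterSystem M W)
variable (k : Type) [CommRing k] (u : B → k)

def CW.eIdeal : TwoSidedIdeal (CW cs k u) :=
  TwoSidedIdeal.span {x : CW cs k u | ∃ i : B, x = eCW cs k u (simpleR cs i) - 1}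

abbrev CW.eQuotient := (CW.eIdeal cs k u).ringCon.Quotient

def CW.eQuotientMk : CW cs k u →ₐ[k] CW.eQuotient cs k u := RingCon.mkₐ k _

lemma CW.eQuotientMk_eCW (t : Refl cs) : CW.eQuotientMk cs k u (eCW cs k u t) = 1 :=
  map_eCW_eq_one cs (fun i => (RingCon.eq _).2 <|
    ((CW.eIdeal cs k u).rel_iff _ _).2 (TwoSidedIdeal.subset_span ⟨i, rfl⟩)) t

/-- The inverse of `𝔭` modulo `CW.eIdeal`. -/
def HW.toEQuotient : HW M k u →ₐ[k] CW.eQuotient cs k u :=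
  HW.lift M k u (fun i => CW.eQuotientMk cs k u (gCW cs k u i))
    (fun i j hij => by
      simpa only [map_list_prod, List.map_map, Function.comp_def] using
        congrArg (CW.eQuotientMk cs k u) (prod_alternatingWord_gCW cs k u i j hij))
    (fun i => by
      rw [← map_mul, gCW_mul_self]
      simp only [map_add, map_mul, map_one, AlgHom.commutes, CW.eQuotientMk_eCW, map_sub]
      noncomm_ring)

lemma HW.toEQuotient_comp_toHW :
    (HW.toEQuotient cs k u).comp (CW.toHW cs k u) = CW.eQuotientMk cs k u :=
  CW.algHom_ext cs (fun i => by simp [HW.toEQuotient])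
    (fun t => by simp [CW.eQuotientMk_eCW])

lemma CW.ker_toHW : TwoSidedIdeal.ker (CW.toHW cs k u) = CW.eIdeal cs k u := by
  apply le_antisymm
  · intro x hx
    rw [TwoSidedIdeal.mem_ker] at hx
    have hπx : CW.eQuotientMk cs k u x = 0 := by
      rw [← HW.toEQuotient_comp_toHW, AlgHom.comp_apply, hx, map_zero]
    rw [← TwoSidedIdeal.ker_ringCon_mk' (CW.eIdeal cs k u), TwoSidedIdeal.mem_ker]
    exact hπx
  · rw [CW.eIdeal, TwoSidedIdeal.span_le]
    rintro _ ⟨i, rfl⟩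
    rw [SetLike.mem_coe, TwoSidedIdeal.mem_ker, map_sub, CW.toHW_eCW, map_one, sub_self]

end Kernel

theorem statement4_general {B : Type} {M : CoxeterMatrix B} {W : Type} [Group W]
    (cs : CoxeterSystem M W) (k : Type) [CommRing k] (u : B → k) :
    ∃ p : CW cs k u →ₐ[k] HW M k u,
      (∀ i : B, p (gCW cs k u i) = THW M k u i) ∧
      (∀ t : Refl cs, p (eCW cs k u t) = 1) ∧
      Function.Surjective p ∧
      (∀ gg : W → CW cs k u, IsGFamily cs k u gg →
        ∀ TT : W → HW M k u, IsTFamily cs k u TT →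
          ∀ w : W, p (gg w) = TT w) ∧
      (∀ J : Finset (Refl cs), p (eJ cs k u J) = 1) ∧
      TwoSidedIdeal.ker p =
        TwoSidedIdeal.span {x : CW cs k u | ∃ i : B, x = eCW cs k u (simpleR cs i) - 1} := by
  refine ⟨CW.toHW cs k u, CW.toHW_gCW cs k u, CW.toHW_eCW cs k u, CW.toHW_surjective cs k u,
    ?_, CW.toHW_eJ cs k u, CW.ker_toHW cs k u⟩
  intro gg hgg TT hTT w
  obtain ⟨l, hl, rfl⟩ := cs.exists_isReduced w
  rw [hgg l hl, hTT l hl, CW.toHW_prod_map_gCW]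

/-- The assignment `g_s ↦ T_s`, `e_t ↦ 1` induces a surjective `k`-algebra
morphism `𝔭 : C_W(u) → H_W(u)`; it maps `g_w` to `T_w` for every `w ∈ W`, maps each `e_J`
to `1`, and its kernel is the two-sided ideal generated by the `e_s − 1`, `s ∈ S`. -/
theorem statement4 {B : Type} {M : CoxeterMatrix B} {W : Type} [Group W]
    (cs : CoxeterSystem M W) (k : Type) [CommRing k] (u : B → k)
    (hu : ∀ i j : B, IsConj (cs.simple i) (cs.simple j) → u i = u j) :
    ∃ p : CW cs k u →ₐ[k] HW M k u,
      (∀ i : B, p (gCW cs k u i) = THW M k u i) ∧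
      (∀ t : Refl cs, p (eCW cs k u t) = 1) ∧
      Function.Surjective p ∧
      (∀ gg : W → CW cs k u, IsGFamily cs k u gg →
        ∀ TT : W → HW M k u, IsTFamily cs k u TT →
          ∀ w : W, p (gg w) = TT w) ∧
      (∀ J : Finset (Refl cs), p (eJ cs k u J) = 1) ∧
      TwoSidedIdeal.ker p =
        TwoSidedIdeal.span {x : CW cs k u | ∃ i : B, x = eCW cs k u (simpleR cs i) - 1} :=
  statement4_general cs k u

end CWpaper
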